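/- Let p be a projection and e an effect on a complex Hilbert space H, with cosine c, sine s, off-diagonal part d := pep⊥ + p⊥ep, and b := (d²)^{1/2}. Suppose p and e are in generic position, i.e., d has dense range in H. Then: (i) c and s have dense range; (ii) ran(p) ∩ ker(1−e) = {0}, ran(p) ∩ ker(e) = {0}, ker(p) ∩ ker(1−e) = {0}, and ker(p) ∩ ker(e) = {0}; (iii) every self-adjoint k with k² = 1 and d = bk = kb satisfies kpk = 1 − p. -/

import Mathlib

/-!
Generic position says that the self-adjoint operator `d` is injective. If `c x = 0`, then
`⟪e p x, p x⟫ + ⟪e⊥ p⊥ x, p⊥ x⟫ = ⟪c² x, x⟫ = 0` with both terms nonnegative, so `e p x = 0` and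
`e p⊥ x = p⊥ x`, whence `d x = p p⊥ x = 0`. Hence `c²` is injective and self-adjoint, so it has
dense range, and so does `c`. Replacing `e` by `e⊥` turns `c` into `s` and `d` into `-d`. A common
eigenvector of `p` and `e` is killed by `d`, which gives (ii).

For (iii), `p d = d p⊥` together with `d = b k = k b` makes `t := p + k p k - 1` anticommute with
`b`. Then `b t² = -t b t` is both `≤ 0` and, as a product of commuting positive operators, `≥ 0`;
so `b t² = 0`, and since `b` is injective (because `d = k b` is), `t² = 0`, i.e. `t = 0`.
-/

open ContinuousLinearMap ComplexOrder Function

section Ring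

variable {R : Type*} [Ring R]

def offDiag (p e : R) : R := p * e * (1 - p) + (1 - p) * e * p

def cosSq (p e : R) : R := p * e * p + (1 - p) * (1 - e) * (1 - p)

theorem cosSq_one_sub (p e : R) :
    cosSq p (1 - e) = p * (1 - e) * p + (1 - p) * e * (1 - p) := by
  rw [cosSq, sub_sub_cancel]

theorem IsIdempotentElem.mul_offDiag {p : R} (hp : IsIdempotentElem p) (e : R) :
    p * offDiag p e = offDiag p e * (1 - p) := by
  simp only [offDiag, mul_add, add_mul, ← mul_assoc, hp.eq, hp.mul_one_sub_self, zero_mul,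
    add_zero]
  rw [mul_assoc _ (1 - p), hp.one_sub.eq, mul_assoc _ p, hp.mul_one_sub_self, mul_zero, add_zero]

theorem IsIdempotentElem.offDiag_one_sub {p : R} (hp : IsIdempotentElem p) (e : R) :
    offDiag p (1 - e) = -offDiag p e := by
  have h₁ : p * (1 - e) * (1 - p) = -(p * e * (1 - p)) := by
    rw [mul_one_sub p e, sub_mul, hp.mul_one_sub_self, zero_sub]
  have h₂ : (1 - p) * (1 - e) * p = -((1 - p) * e * p) := by
    rw [mul_one_sub (1 - p) e, sub_mul, hp.one_sub_mul_self, zero_sub]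
  rw [offDiag, offDiag, h₁, h₂, neg_add]

theorem anticommute_of_swap {p d b k : R} (hk : k * k = 1) (hbk : d = b * k) (hkb : d = k * b)
    (hpd : p * d = d * (1 - p)) :
    (p + k * p * k - 1) * b = -(b * (p + k * p * k - 1)) := by
  have hpb : p * b = b * (1 - k * p * k) :=
    calc p * b = p * (b * k) * k := by simp only [mul_assoc, hk, mul_one]
      _ = b * (k * (1 - p) * k) := by rw [← hbk, hpd, hbk]; simp only [mul_assoc]
      _ = b * (1 - k * p * k) := by rw [mul_one_sub, sub_mul, hk]
  have hqb : k * p * k * b = b * (1 - p) :=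
    calc k * p * k * b = k * (p * d) := by rw [hkb]; simp only [mul_assoc]
      _ = b * (1 - p) := by rw [hpd, hkb, ← mul_assoc, ← mul_assoc, hk, one_mul]
  calc (p + k * p * k - 1) * b = p * b + k * p * k * b - b := by noncomm_ring
    _ = -(b * (p + k * p * k - 1)) := by rw [hpb, hqb]; noncomm_ring

end Ring

section StarRing

variable {R : Type*} [Ring R] [StarRing R]

theorem isSelfAdjoint_offDiag {p e : R} (hp : IsSelfAdjoint p) (he : IsSelfAdjoint e) :
    IsSelfAdjoint (offDiag p e) := by
  simp only [offDiag, IsSelfAdjoint, star_add, star_mul, star_sub, star_one, hp.star_eq,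
    he.star_eq, mul_assoc, add_comm]

theorem cosSq_nonneg [PartialOrder R] [StarOrderedRing R] {p e : R} (hp : IsSelfAdjoint p)
    (he0 : 0 ≤ e) (he1 : e ≤ 1) : 0 ≤ cosSq p e :=
  add_nonneg (hp.conjugate_nonneg he0) (((IsSelfAdjoint.one R).sub hp).conjugate_nonneg
    (sub_nonneg.2 he1))

end StarRing

section CStarAlgebra

variable {A : Type*} [CStarAlgebra A] [PartialOrder A] [StarOrderedRing A]

theorem mul_mul_self_eq_zero_of_anticommute {b t : A} (hb : 0 ≤ b) (ht : IsSelfAdjoint t)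
    (htb : t * b = -(b * t)) : b * (t * t) = 0 := by
  have hconj : b * (t * t) = -(t * b * t) := by rw [htb, neg_mul, neg_neg, mul_assoc]
  have hcomm : Commute b (t * t) :=
    calc b * (t * t) = -(t * b * t) := hconj
      _ = t * t * b := by rw [mul_assoc t b t, mul_assoc t t b, htb, mul_neg]
  refine le_antisymm ?_ (hcomm.mul_nonneg hb ?_)
  · rw [hconj, neg_nonpos]
    exact ht.conjugate_nonneg hb
  · simpa [ht.star_eq] using star_mul_self_nonneg t

theorem conj_eq_one_sub_of_swap {p d b k : A} (hp : IsSelfAdjoint p) (hd : IsLeftRegular d)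
    (hpd : p * d = d * (1 - p)) (hb : 0 ≤ b) (hk : IsSelfAdjoint k) (hk2 : k * k = 1)
    (hbk : d = b * k) (hkb : d = k * b) : k * p * k = 1 - p := by
  set t := p + k * p * k - 1
  have ht : IsSelfAdjoint t := (hp.add (by simpa [hk.star_eq] using hp.conjugate k)).sub (.one A)
  have hbt := mul_mul_self_eq_zero_of_anticommute hb ht (anticommute_of_swap hk2 hbk hkb hpd)
  have htt : t * t = 0 :=
    hd (show d * (t * t) = d * 0 by rw [hkb, mul_assoc, hbt, mul_zero, mul_zero])
  have ht0 : t = 0 := (CStarRing.star_mul_self_eq_zero_iff t).mp (by rwa [ht.star_eq])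
  exact eq_sub_of_add_eq' (sub_eq_zero.mp ht0)

end CStarAlgebra

section NormedSpace

variable {E : Type*} [NormedAddCommGroup E] [NormedSpace ℂ E]

theorem isLeftRegular_of_injective {T : E →L[ℂ] E} (hT : Injective T) : IsLeftRegular T :=
  fun _ _ h => ext fun x => hT congr($h x)

theorem offDiag_apply_eq_zero_of_apply_eq_smul {p e : E →L[ℂ] E} (hpi : IsIdempotentElem p)
    {x : E} {l m : ℂ} (hpx : p x = l • x) (hex : e x = m • x) : offDiag p e x = 0 := by
  have hl : (l - l * l) • x = 0 := by
    have : p (p x) = p x := congr($hpi.eq x)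
    rw [hpx, map_smul, hpx, smul_smul] at this
    rw [sub_smul, this, sub_self]
  have hqx : (1 - p) x = (1 - l) • x := by
    rw [sub_apply, one_apply_eq_self, hpx, sub_smul, one_smul]
  change p (e ((1 - p) x)) + (1 - p) (e (p x)) = 0
  simp only [hqx, hpx, hex, map_smul]
  linear_combination (norm := module) (2 * m) • hl

theorem Submodule.inf_eq_bot_of_injective_offDiag {p e : E →L[ℂ] E}
    (hpi : IsIdempotentElem p) (hd : Injective ⇑(offDiag p e)) {U V : Submodule ℂ E} {l m : ℂ}
    (hU : ∀ x ∈ U, p x = l • x) (hV : ∀ x ∈ V, e x = m • x) : U ⊓ V = ⊥ :=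
  (Submodule.eq_bot_iff _).2 fun x hx => hd <| by
    rw [map_zero]; exact offDiag_apply_eq_zero_of_apply_eq_smul hpi (hU x hx.1) (hV x hx.2)

end NormedSpace

section InnerProductSpace

variable {H : Type*} [NormedAddCommGroup H] [InnerProductSpace ℂ H] [CompleteSpace H]

theorem IsSelfAdjoint.denseRange_iff_injective {T : H →L[ℂ] H} (hT : IsSelfAdjoint T) :
    DenseRange T ↔ Injective T := by
  change DenseRange T ↔ Injective (T : H →ₗ[ℂ] H)
  rw [← LinearMap.ker_eq_bot (f := (T : H →ₗ[ℂ] H)), ← hT.adjoint_eq,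
    ← ContinuousLinearMap.orthogonal_range, ← Submodule.topologicalClosure_eq_top_iff,
    ← Submodule.dense_iff_topologicalClosure_eq_top, hT.adjoint_eq]
  rfl

theorem inner_apply_self_eq_zero_iff_of_nonneg {T : H →L[ℂ] H} (hT : 0 ≤ T) (x : H) :
    inner ℂ (T x) x = 0 ↔ T x = 0 := by
  refine ⟨fun h => ?_, fun h => by rw [h, inner_zero_left]⟩
  set r := CFC.sqrt T
  have hr : IsSelfAdjoint r := (CFC.sqrt_nonneg T).isSelfAdjoint
  have hrr : r * r = T := CFC.sqrt_mul_sqrt_self T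
  have hrx : r x = 0 := by
    rw [← inner_self_eq_zero (𝕜 := ℂ), ← h, ← hrr]
    exact (hr.isSymmetric (r x) x).symm
  rw [← hrr]
  exact (congrArg r hrx).trans (map_zero r)

theorem apply_eq_zero_of_add_apply_eq_zero {A B : H →L[ℂ] H} (hA : 0 ≤ A) (hB : 0 ≤ B) {x : H}
    (h : (A + B) x = 0) : A x = 0 := by
  have hsum : inner ℂ (A x) x + inner ℂ (B x) x = 0 := by
    rw [← inner_add_left, ← add_apply, h, inner_zero_left]
  rw [← inner_apply_self_eq_zero_iff_of_nonneg hA]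
  exact ((add_eq_zero_iff_of_nonneg (((nonneg_iff_isPositive A).mp hA).inner_nonneg_left x)
    (((nonneg_iff_isPositive B).mp hB).inner_nonneg_left x)).mp hsum).1

theorem apply_apply_eq_zero_of_conj {a p : H →L[ℂ] H} (ha : 0 ≤ a) (hp : IsSelfAdjoint p) {x : H}
    (h : (p * a * p) x = 0) : a (p x) = 0 := by
  rw [← inner_apply_self_eq_zero_iff_of_nonneg ha, ← inner_zero_left x, ← h]
  exact (hp.isSymmetric (a (p x)) x).symm

theorem offDiag_apply_eq_zero_of_cosSq_apply_eq_zero {p e : H →L[ℂ] H} (hp : IsSelfAdjoint p)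
    (hpi : IsIdempotentElem p) (he0 : 0 ≤ e) (he1 : e ≤ 1) {x : H} (hx : cosSq p e x = 0) :
    offDiag p e x = 0 := by
  have hq : IsSelfAdjoint (1 - p) := (IsSelfAdjoint.one _).sub hp
  have hep : e (p x) = 0 :=
    apply_apply_eq_zero_of_conj he0 hp
      (apply_eq_zero_of_add_apply_eq_zero (hp.conjugate_nonneg he0)
        (hq.conjugate_nonneg (sub_nonneg.2 he1)) hx)
  have heq : (1 - e) ((1 - p) x) = 0 :=
    apply_apply_eq_zero_of_conj (sub_nonneg.2 he1) hq
      (apply_eq_zero_of_add_apply_eq_zero (hq.conjugate_nonneg (sub_nonneg.2 he1))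
        (hp.conjugate_nonneg he0) (by rwa [cosSq, add_comm] at hx))
  rw [sub_apply, one_apply_eq_self, sub_eq_zero] at heq
  change p (e ((1 - p) x)) + (1 - p) (e (p x)) = 0
  rw [← heq, hep, map_zero, add_zero]
  exact congr($hpi.mul_one_sub_self x)

theorem denseRange_cosSq {p e : H →L[ℂ] H} (hp : IsSelfAdjoint p) (hpi : IsIdempotentElem p)
    (he0 : 0 ≤ e) (he1 : e ≤ 1) (hd : Injective ⇑(offDiag p e)) : DenseRange ⇑(cosSq p e) := by
  rw [(cosSq_nonneg hp he0 he1).isSelfAdjoint.denseRange_iff_injective,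
    injective_iff_map_eq_zero]
  exact fun x hx => hd ((offDiag_apply_eq_zero_of_cosSq_apply_eq_zero hp hpi he0 he1 hx).trans
    (map_zero _).symm)

end InnerProductSpace

theorem stmt16_general {H : Type*} [NormedAddCommGroup H] [InnerProductSpace ℂ H] [CompleteSpace H]
    (p e c s b : H →L[ℂ] H)
    (hp : IsSelfAdjoint p) (hp2 : p ^ 2 = p)
    (he0 : 0 ≤ e) (he1 : e ≤ 1)
    (hc2 : c ^ 2 = p * e * p + (1 - p) * (1 - e) * (1 - p))
    (hs2 : s ^ 2 = p * (1 - e) * p + (1 - p) * e * (1 - p))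
    (hb0 : 0 ≤ b)
    (hgen : DenseRange (p * e * (1 - p) + (1 - p) * e * p : H →L[ℂ] H)) :
    (DenseRange c ∧ DenseRange s) ∧
    (LinearMap.range (p : H →ₗ[ℂ] H) ⊓ LinearMap.ker ((1 - e : H →L[ℂ] H) : H →ₗ[ℂ] H) = ⊥ ∧
      LinearMap.range (p : H →ₗ[ℂ] H) ⊓ LinearMap.ker (e : H →ₗ[ℂ] H) = ⊥ ∧
      LinearMap.ker (p : H →ₗ[ℂ] H) ⊓ LinearMap.ker ((1 - e : H →L[ℂ] H) : H →ₗ[ℂ] H) = ⊥ ∧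
      LinearMap.ker (p : H →ₗ[ℂ] H) ⊓ LinearMap.ker (e : H →ₗ[ℂ] H) = ⊥) ∧
    ∀ k : H →L[ℂ] H, IsSelfAdjoint k → k ^ 2 = 1 →
      p * e * (1 - p) + (1 - p) * e * p = b * k →
      p * e * (1 - p) + (1 - p) * e * p = k * b →
      k * p * k = 1 - p := by
  have hpi : IsIdempotentElem p := (sq p).symm.trans hp2
  have hd : Injective ⇑(offDiag p e) :=
    (isSelfAdjoint_offDiag hp he0.isSelfAdjoint).denseRange_iff_injective.mp hgen
  have hran : ∀ x ∈ LinearMap.range (p : H →ₗ[ℂ] H), p x = (1 : ℂ) • x :=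
    fun x ⟨y, hy⟩ => by rw [one_smul, ← hy]; exact congr($hpi.eq y)
  have hkerp : ∀ x ∈ LinearMap.ker (p : H →ₗ[ℂ] H), p x = (0 : ℂ) • x :=
    fun x hx => hx.trans (zero_smul ℂ x).symm
  have hfix : ∀ x ∈ LinearMap.ker ((1 - e : H →L[ℂ] H) : H →ₗ[ℂ] H), e x = (1 : ℂ) • x := by
    intro x hx
    rw [LinearMap.mem_ker, coe_coe, sub_apply, one_apply_eq_self, sub_eq_zero] at hx
    rw [one_smul, ← hx]
  have hkere : ∀ x ∈ LinearMap.ker (e : H →ₗ[ℂ] H), e x = (0 : ℂ) • x :=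
    fun x hx => hx.trans (zero_smul ℂ x).symm
  refine ⟨⟨.of_comp (g := c) ?_, .of_comp (g := s) ?_⟩,
    ⟨Submodule.inf_eq_bot_of_injective_offDiag hpi hd hran hfix,
      Submodule.inf_eq_bot_of_injective_offDiag hpi hd hran hkere,
      Submodule.inf_eq_bot_of_injective_offDiag hpi hd hkerp hfix,
      Submodule.inf_eq_bot_of_injective_offDiag hpi hd hkerp hkere⟩,
    fun k hk hk2 hbk hkb => conj_eq_one_sub_of_swap hp (isLeftRegular_of_injective hd)
      (hpi.mul_offDiag e) hb0 hk ((sq k).symm.trans hk2) hbk hkb⟩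
  · change DenseRange ⇑(c * c)
    rw [← sq, hc2]
    exact denseRange_cosSq hp hpi he0 he1 hd
  · change DenseRange ⇑(s * s)
    rw [← sq, hs2, ← cosSq_one_sub]
    refine denseRange_cosSq hp hpi (sub_nonneg.2 he1) (sub_le_self 1 he0) ?_
    rw [hpi.offDiag_one_sub]
    exact neg_injective.comp hd

/-- In `B(H)`, let `p` be a projection and `e` an effect, with cosine
`c` and sine `s` (encoded as the nonnegative square roots of `pep + p⊥e⊥p⊥` and
`pe⊥p + p⊥ep⊥`), off-diagonal part `d := pep⊥ + p⊥ep`, and `b := (d²)^{1/2}`.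
Suppose `p` and `e` are in generic position, i.e. `d` has dense range. Then:
(i) `c` and `s` have dense range;
(ii) `ran p ∩ ker(1−e) = 0`, `ran p ∩ ker e = 0`, `ker p ∩ ker(1−e) = 0`,
`ker p ∩ ker e = 0`;
(iii) every self-adjoint `k` with `k² = 1` and `d = bk = kb` satisfies `kpk = 1 − p`. -/
theorem stmt16 {H : Type*} [NormedAddCommGroup H] [InnerProductSpace ℂ H] [CompleteSpace H]
    (p e c s b : H →L[ℂ] H)
    (hp : IsSelfAdjoint p) (hp2 : p ^ 2 = p)
    (he0 : 0 ≤ e) (he1 : e ≤ 1)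
    (hc0 : 0 ≤ c) (hc2 : c ^ 2 = p * e * p + (1 - p) * (1 - e) * (1 - p))
    (hs0 : 0 ≤ s) (hs2 : s ^ 2 = p * (1 - e) * p + (1 - p) * e * (1 - p))
    (hb0 : 0 ≤ b) (hb2 : b ^ 2 = (p * e * (1 - p) + (1 - p) * e * p) ^ 2)
    (hgen : DenseRange (p * e * (1 - p) + (1 - p) * e * p : H →L[ℂ] H)) :
    (DenseRange c ∧ DenseRange s) ∧
    (LinearMap.range (p : H →ₗ[ℂ] H) ⊓ LinearMap.ker ((1 - e : H →L[ℂ] H) : H →ₗ[ℂ] H) = ⊥ ∧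
      LinearMap.range (p : H →ₗ[ℂ] H) ⊓ LinearMap.ker (e : H →ₗ[ℂ] H) = ⊥ ∧
      LinearMap.ker (p : H →ₗ[ℂ] H) ⊓ LinearMap.ker ((1 - e : H →L[ℂ] H) : H →ₗ[ℂ] H) = ⊥ ∧
      LinearMap.ker (p : H →ₗ[ℂ] H) ⊓ LinearMap.ker (e : H →ₗ[ℂ] H) = ⊥) ∧
    ∀ k : H →L[ℂ] H, IsSelfAdjoint k → k ^ 2 = 1 →
      p * e * (1 - p) + (1 - p) * e * p = b * k →
      p * e * (1 - p) + (1 - p) * e * p = k * b →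
      k * p * k = 1 - p :=
  stmt16_general p e c s b hp hp2 he0 he1 hc2 hs2 hb0 hgen
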